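/- arXiv:2412.10395 — 4 statements merged into one kernel-verified Lean document; each statement's English description precedes it below -/
import Mathlib

section
/- Let a ∈ ℝ with 0 < a < 1 and let b, c, k, m ∈ ℂ satisfy Re(b) > 0, Re(m) > 0 and ‖c‖ < 1. Then ∫₀¹ t^{m−1} (−log(a t))^k / (1 + c t^b) dt = Σ_{j=0}^∞ (−c)^j · Γ(1 + k, −(b j + m) log a) / (a^{b j + m} · (b j + m)^{k+1}). -/
/-!
Expanding `1 / (1 + c t^b)` as a geometric series, legitimate since `‖c t^b‖ ≤ ‖c‖ < 1` on
`(0, 1]`, reduces the theorem to the integrals `∫₀¹ t^(s-1) (-log (a t))^k dt` with `0 < re s`.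
For real `s > 0` the substitution `t = exp (-u / s)` turns such an integral into
`s^(-(k+1)) ∫₀^∞ e^(-u) (u - s log a)^k du = Γ(1 + k, -s log a) / (a^s s^(k+1))`.
Both sides are holomorphic on the right half-plane, the left one as the Mellin transform of
`(-log (a t))^k` cut off at `t = 1`, the right one by differentiation under the integral sign,
so the identity extends from the positive reals by the identity theorem.
-/

open MeasureTheory

/-- Upper incomplete gamma function: `Γ(s, z) = e^{-z} ∫₀^∞ e^{-t} (t + z)^(s-1) dt`,
with principal-branch complex powers. -/
noncomputable def uGamma (s z : ℂ) : ℂ :=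
  Complex.exp (-z) * ∫ t in Set.Ioi (0:ℝ), Complex.exp (-(t:ℂ)) * ((t:ℂ) + z) ^ (s - 1)

open Set Filter Asymptotics Topology

theorem Real.rpow_le_rpow_add_rpow {x δ B : ℝ} (hδ : 0 < δ) (hδx : δ ≤ x) (hxB : x ≤ B)
    (p : ℝ) :
    x ^ p ≤ δ ^ p + B ^ p := by
  rcases le_total 0 p with hp | hp
  · have := Real.rpow_le_rpow (hδ.le.trans hδx) hxB hp
    linarith [Real.rpow_nonneg hδ.le p]
  · have := Real.rpow_le_rpow_of_nonpos hδ hδx hp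
    linarith [Real.rpow_nonneg (hδ.le.trans (hδx.trans hxB)) p]

theorem Complex.norm_cpow_le_of_le_re {w : ℂ} {δ B : ℝ} (hδ : 0 < δ) (hδw : δ ≤ w.re)
    (hwB : ‖w‖ ≤ B) (y : ℂ) :
    ‖w ^ y‖ ≤ Real.exp (Real.pi * |y.im|) * (δ ^ y.re + B ^ y.re) := by
  have hexp : Real.exp (-(w.arg * y.im)) ≤ Real.exp (Real.pi * |y.im|) := by
    gcongr
    calc -(w.arg * y.im) ≤ |w.arg| * |y.im| := by rw [← abs_mul]; exact neg_le_abs _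
      _ ≤ Real.pi * |y.im| := by gcongr; exact Complex.abs_arg_le_pi w
  calc ‖w ^ y‖ ≤ ‖w‖ ^ y.re / Real.exp (w.arg * y.im) := Complex.norm_cpow_le w y
    _ = Real.exp (-(w.arg * y.im)) * ‖w‖ ^ y.re := by rw [Real.exp_neg]; ring
    _ ≤ Real.exp (Real.pi * |y.im|) * (δ ^ y.re + B ^ y.re) := by
      gcongr
      exact Real.rpow_le_rpow_add_rpow hδ (hδw.trans (Complex.re_le_norm w)) hwB _

theorem integrableOn_exp_neg_mul_add_rpow (p : ℝ) {C : ℝ} (hC : 0 < C) :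
    IntegrableOn (fun u : ℝ => Real.exp (-u) * (u + C) ^ p) (Ioi 0) := by
  refine integrable_of_isBigO_exp_neg one_half_pos
    ((Real.continuous_exp.comp continuous_neg).continuousOn.mul
      (ContinuousOn.rpow_const (by fun_prop) fun u (hu : 0 ≤ u) => Or.inl (by linarith))) ?_
  have hpow : (fun u : ℝ => (u + C) ^ p) =O[atTop] fun u => Real.exp (1 / 2 * u) := by
    have h := ((isLittleO_rpow_exp_pos_mul_atTop p one_half_pos).comp_tendsto
      (tendsto_atTop_add_const_right atTop C tendsto_id)).isBigO
    refine h.trans (isBigO_of_le' (c := Real.exp (1 / 2 * C)) atTop fun u => ?_)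
    simp only [Function.comp_apply, id, Real.norm_eq_abs, Real.abs_exp, ← Real.exp_add]
    exact le_of_eq (by ring_nf)
  refine ((isBigO_refl (fun u : ℝ => Real.exp (-u)) atTop).mul hpow).congr_right fun u => ?_
  rw [← Real.exp_add]; ring_nf

theorem integral_Ioo_zero_one_eq_integral_Ioi_exp_neg_div {E : Type*} [NormedAddCommGroup E]
    [NormedSpace ℝ E] (g : ℝ → E) {s : ℝ} (hs : 0 < s) :
    ∫ t in Ioo 0 1, g t = ∫ u in Ioi 0, (Real.exp (-u / s) / s) • g (Real.exp (-u / s)) := by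
  have himage : (fun u => Real.exp (-u / s)) '' Ioi 0 = Ioo 0 1 := by
    ext t
    constructor
    · rintro ⟨u, hu, rfl⟩
      exact ⟨Real.exp_pos _,
        Real.exp_lt_one_iff.mpr (div_neg_of_neg_of_pos (neg_lt_zero.mpr hu) hs)⟩
    · rintro ⟨ht0, ht1⟩
      refine ⟨-s * Real.log t,
        mul_pos_of_neg_of_neg (neg_lt_zero.mpr hs) (Real.log_neg ht0 ht1), ?_⟩
      simp only [neg_mul, neg_neg, mul_div_cancel_left₀ _ hs.ne', Real.exp_log ht0]
  have hderiv : ∀ u ∈ Ioi (0:ℝ), HasDerivWithinAt (fun u => Real.exp (-u / s))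
      (-Real.exp (-u / s) / s) (Ioi 0) u :=
    fun u _ => ((((hasDerivAt_neg u).div_const s).exp).congr_deriv (by ring)).hasDerivWithinAt
  have hinj : InjOn (fun u => Real.exp (-u / s)) (Ioi 0) := fun u _ v _ h => by
    have := Real.exp_injective h
    field_simp at this
    linarith
  rw [← himage, integral_image_eq_integral_abs_deriv_smul measurableSet_Ioi hderiv hinj]
  simp only [abs_div, abs_neg, abs_of_pos (Real.exp_pos _), abs_of_pos hs]

theorem integral_div_one_add_eq_tsum {α : Type*} [MeasurableSpace α] {μ : Measure α}
    {f q : α → ℂ} {r : ℝ} (hf : Integrable f μ) (hq : AEStronglyMeasurable q μ) (hr0 : 0 ≤ r)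
    (hr1 : r < 1) (hqr : ∀ᵐ x ∂μ, ‖q x‖ ≤ r) :
    ∫ x, f x / (1 + q x) ∂μ = ∑' j : ℕ, ∫ x, (-q x) ^ j * f x ∂μ := by
  have hpow : ∀ j : ℕ, ∀ᵐ x ∂μ, ‖(-q x) ^ j‖ ≤ r ^ j := fun j => hqr.mono fun x hx => by
    rw [norm_pow, norm_neg]; exact pow_le_pow_left₀ (norm_nonneg _) hx j
  have hint : ∀ j : ℕ, Integrable (fun x => (-q x) ^ j * f x) μ := fun j =>
    hf.bdd_mul (hq.neg.pow j) (hpow j)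
  have hsum : Summable fun j : ℕ => ∫ x, ‖(-q x) ^ j * f x‖ ∂μ := by
    refine Summable.of_nonneg_of_le (fun j => integral_nonneg fun x => norm_nonneg _) (fun j => ?_)
      ((summable_geometric_of_lt_one hr0 hr1).mul_right (∫ x, ‖f x‖ ∂μ))
    rw [← integral_const_mul]
    refine integral_mono_ae (hint j).norm (hf.norm.const_mul _) ((hpow j).mono fun x hx => ?_)
    simp only [norm_mul]
    exact mul_le_mul_of_nonneg_right hx (norm_nonneg _)
  rw [integral_tsum_of_summable_integral_norm hint hsum]
  refine integral_congr_ae (hqr.mono fun x hx => ?_)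
  beta_reduce
  rw [tsum_mul_right, tsum_geometric_of_norm_lt_one (by rw [norm_neg]; linarith), sub_neg_eq_add,
    div_eq_inv_mul]

noncomputable def shiftedGammaIntegral (k z : ℂ) : ℂ :=
  ∫ u in Ioi (0:ℝ), Complex.exp (-(u:ℂ)) * ((u:ℂ) + z) ^ k

theorem uGamma_eq_exp_mul_shiftedGammaIntegral (k z : ℂ) :
    uGamma (1 + k) z = Complex.exp (-z) * shiftedGammaIntegral k z := by
  rw [uGamma, shiftedGammaIntegral, add_sub_cancel_left]

section ShiftedGammaIntegral

variable (k : ℂ)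

noncomputable def shiftedGammaBound (δ R u : ℝ) : ℝ :=
  Real.exp (Real.pi * |k.im|) * (Real.exp (-u) * (δ ^ k.re + (u + R) ^ k.re))

theorem norm_exp_neg_mul_cpow_add_le {u δ R : ℝ} (hu : 0 ≤ u) (hδ : 0 < δ) {z : ℂ}
    (hδz : δ ≤ z.re) (hzR : ‖z‖ ≤ R) :
    ‖Complex.exp (-(u:ℂ)) * ((u:ℂ) + z) ^ k‖ ≤ shiftedGammaBound k δ R u := by
  have hre : δ ≤ ((u:ℂ) + z).re := by rw [Complex.add_re, Complex.ofReal_re]; linarith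
  have hnorm : ‖(u:ℂ) + z‖ ≤ u + R :=
    (norm_add_le _ _).trans (by rw [Complex.norm_real, Real.norm_of_nonneg hu]; linarith)
  rw [norm_mul, ← Complex.ofReal_neg, Complex.norm_exp_ofReal]
  calc Real.exp (-u) * ‖((u:ℂ) + z) ^ k‖
      ≤ Real.exp (-u) * (Real.exp (Real.pi * |k.im|) * (δ ^ k.re + (u + R) ^ k.re)) := by
        gcongr; exact Complex.norm_cpow_le_of_le_re hδ hre hnorm k
    _ = shiftedGammaBound k δ R u := by rw [shiftedGammaBound]; ring

theorem integrableOn_shiftedGammaBound (δ : ℝ) {R : ℝ} (hR : 0 < R) :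
    IntegrableOn (shiftedGammaBound k δ R) (Ioi 0) := by
  unfold shiftedGammaBound
  refine Integrable.const_mul ?_ _
  simp only [mul_add]
  refine Integrable.add ?_ (integrableOn_exp_neg_mul_add_rpow k.re hR)
  simpa using (exp_neg_integrableOn_Ioi 0 one_pos).mul_const (δ ^ k.re)

theorem continuousOn_exp_neg_mul_cpow_add {z : ℂ} (hz : 0 < z.re) :
    ContinuousOn (fun u : ℝ => Complex.exp (-(u:ℂ)) * ((u:ℂ) + z) ^ k) (Ioi 0) :=
  (by fun_prop : Continuous fun u : ℝ => Complex.exp (-(u:ℂ))).continuousOn.mul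
    (ContinuousOn.cpow_const (by fun_prop) fun u (hu : 0 < u) => Or.inl
      (by rw [Complex.add_re, Complex.ofReal_re]; linarith))

theorem integrableOn_exp_neg_mul_cpow_add {z : ℂ} (hz : 0 < z.re) :
    IntegrableOn (fun u : ℝ => Complex.exp (-(u:ℂ)) * ((u:ℂ) + z) ^ k) (Ioi 0) := by
  refine Integrable.mono'
    (integrableOn_shiftedGammaBound k z.re (hz.trans_le (Complex.re_le_norm z)))
    ((continuousOn_exp_neg_mul_cpow_add k hz).aestronglyMeasurable measurableSet_Ioi) ?_
  filter_upwards [ae_restrict_mem measurableSet_Ioi] with u hu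
  exact norm_exp_neg_mul_cpow_add_le k (le_of_lt hu) hz le_rfl le_rfl

theorem differentiableOn_shiftedGammaIntegral :
    DifferentiableOn ℂ (shiftedGammaIntegral k) {z | 0 < z.re} := by
  intro z₀ (hz₀ : 0 < z₀.re)
  set V : Set ℂ := {z | z₀.re / 2 < z.re} ∩ {z | ‖z‖ < ‖z₀‖ + 1}
  have hV : V ∈ 𝓝 z₀ :=
    ((isOpen_lt continuous_const Complex.continuous_re).inter
      (isOpen_lt continuous_norm continuous_const)).mem_nhds
      ⟨show z₀.re / 2 < z₀.re by linarith, show ‖z₀‖ < ‖z₀‖ + 1 by linarith⟩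
  have hre : ∀ z ∈ V, 0 < z.re := fun z hz => lt_trans (by linarith) hz.1
  have h_bound : ∀ᵐ u : ℝ ∂volume.restrict (Ioi 0), ∀ z ∈ V,
      ‖k * (Complex.exp (-(u:ℂ)) * ((u:ℂ) + z) ^ (k - 1))‖
        ≤ ‖k‖ * shiftedGammaBound (k - 1) (z₀.re / 2) (‖z₀‖ + 1) u := by
    filter_upwards [ae_restrict_mem measurableSet_Ioi] with u hu z hz
    rw [norm_mul]
    exact mul_le_mul_of_nonneg_left (norm_exp_neg_mul_cpow_add_le (k - 1) (le_of_lt hu)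
      (by linarith) (le_of_lt hz.1) (le_of_lt hz.2)) (norm_nonneg k)
  have h_diff : ∀ᵐ u : ℝ ∂volume.restrict (Ioi 0), ∀ z ∈ V,
      HasDerivAt (fun z => Complex.exp (-(u:ℂ)) * ((u:ℂ) + z) ^ k)
        (k * (Complex.exp (-(u:ℂ)) * ((u:ℂ) + z) ^ (k - 1))) z := by
    filter_upwards [ae_restrict_mem measurableSet_Ioi] with u (hu : 0 < u) z hz
    have hslit : 0 < ((u:ℂ) + z).re := by
      rw [Complex.add_re, Complex.ofReal_re]; linarith [hre z hz]
    exact ((((hasDerivAt_id' z).const_add (u:ℂ)).cpow_const (c := k)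
      (Or.inl hslit)).const_mul (Complex.exp (-(u:ℂ)))).congr_deriv (by ring)
  exact (hasDerivAt_integral_of_dominated_loc_of_deriv_le
    (F' := fun z u => k * (Complex.exp (-(u:ℂ)) * ((u:ℂ) + z) ^ (k - 1))) hV
    (eventually_of_mem hV fun z hz =>
      (integrableOn_exp_neg_mul_cpow_add k (hre z hz)).aestronglyMeasurable)
    (integrableOn_exp_neg_mul_cpow_add k hz₀)
    ((integrableOn_exp_neg_mul_cpow_add (k - 1) hz₀).const_mul k).aestronglyMeasurable
    h_bound ((integrableOn_shiftedGammaBound (k - 1) _ (by positivity)).const_mul _)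
    h_diff).2.differentiableAt.differentiableWithinAt

end ShiftedGammaIntegral

section NegLogPow

variable {a : ℝ} (k : ℂ)

theorem neg_log_ofReal_mul_ofReal (ha : 0 < a) {t : ℝ} (ht : 0 < t) :
    -Complex.log ((a:ℂ) * (t:ℂ)) = ((-Real.log (a * t) : ℝ) : ℂ) := by
  rw [← Complex.ofReal_mul, ← Complex.ofReal_log (by positivity), Complex.ofReal_neg]

theorem neg_log_mul_pos (ha0 : 0 < a) (ha1 : a < 1) {t : ℝ} (ht : t ∈ Ioc 0 1) :
    0 < -Real.log (a * t) :=
  neg_pos.mpr (Real.log_neg (mul_pos ha0 ht.1) (by nlinarith [ht.1, ht.2]))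

theorem continuousOn_neg_log_mul_cpow (ha0 : 0 < a) (ha1 : a < 1) :
    ContinuousOn (fun t : ℝ => (-Complex.log ((a:ℂ) * (t:ℂ))) ^ k) (Ioc 0 1) := by
  have hre : ∀ t ∈ Ioc (0:ℝ) 1, 0 < (-Complex.log ((a:ℂ) * (t:ℂ))).re := fun t ht => by
    rw [neg_log_ofReal_mul_ofReal ha0 ht.1, Complex.ofReal_re]
    exact neg_log_mul_pos ha0 ha1 ht
  refine ContinuousOn.cpow_const (ContinuousOn.neg (ContinuousOn.clog (by fun_prop) fun t ht => ?_))
    fun t ht => Or.inl (hre t ht)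
  rw [← Complex.ofReal_mul]
  exact Complex.ofReal_mem_slitPlane.mpr (mul_pos ha0 ht.1)

noncomputable def truncNegLogPow (a : ℝ) (k : ℂ) : ℝ → ℂ :=
  (Ioc 0 1).indicator fun t => (-Complex.log ((a:ℂ) * (t:ℂ))) ^ k

theorem cpow_smul_truncNegLogPow (s : ℂ) :
    (fun t : ℝ => (t:ℂ) ^ (s - 1) • truncNegLogPow a k t)
      = (Ioc (0:ℝ) 1).indicator fun t => (t:ℂ) ^ (s - 1) * (-Complex.log ((a:ℂ) * (t:ℂ))) ^ k := by
  ext t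
  simp only [truncNegLogPow, indicator_apply, smul_eq_mul, mul_ite, mul_zero]

theorem mellin_truncNegLogPow (s : ℂ) :
    mellin (truncNegLogPow a k) s
      = ∫ t in Ioc (0:ℝ) 1, (t:ℂ) ^ (s - 1) * (-Complex.log ((a:ℂ) * (t:ℂ))) ^ k := by
  rw [mellin, cpow_smul_truncNegLogPow, setIntegral_indicator measurableSet_Ioc,
    inter_eq_right.mpr Ioc_subset_Ioi_self]

theorem mellinConvergent_truncNegLogPow_iff (s : ℂ) :
    MellinConvergent (truncNegLogPow a k) s ↔
      IntegrableOn (fun t : ℝ => (t:ℂ) ^ (s - 1) * (-Complex.log ((a:ℂ) * (t:ℂ))) ^ k)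
        (Ioc 0 1) := by
  rw [MellinConvergent, cpow_smul_truncNegLogPow, integrableOn_indicator_iff measurableSet_Ioc,
    inter_eq_left.mpr Ioc_subset_Ioi_self]

theorem locallyIntegrableOn_truncNegLogPow (ha0 : 0 < a) (ha1 : a < 1) :
    LocallyIntegrableOn (truncNegLogPow a k) (Ioi 0) := by
  rw [locallyIntegrableOn_iff isOpen_Ioi.isLocallyClosed]
  intro K hK hKc
  rw [truncNegLogPow, integrableOn_indicator_iff measurableSet_Ioc]
  have hsub : Icc 0 1 ∩ K ⊆ Ioc 0 1 := fun t ht => ⟨hK ht.2, ht.1.2⟩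
  exact (((continuousOn_neg_log_mul_cpow k ha0 ha1).mono hsub).integrableOn_compact
    (isCompact_Icc.inter_right hKc.isClosed)).mono_set
    (inter_subset_inter_left K Ioc_subset_Icc_self)

theorem truncNegLogPow_isBigO_atTop :
    truncNegLogPow a k =O[atTop] fun t => Real.exp (-1 * t) := by
  refine (isBigO_zero _ _).congr' ?_ EventuallyEq.rfl
  filter_upwards [eventually_gt_atTop 1] with t ht
  simp [truncNegLogPow, indicator_of_notMem, ht.not_ge]

theorem truncNegLogPow_isBigO_nhdsGT_zero (ha0 : 0 < a) (ha1 : a < 1) {ε : ℝ} (hε : 0 < ε) :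
    truncNegLogPow a k =O[𝓝[>] 0] (· ^ (-ε)) := by
  have hlog : Tendsto (fun t => -Real.log (a * t)) (𝓝[>] 0) atTop := by
    refine (tendsto_atTop_add_const_right _ (-Real.log a)
      (tendsto_neg_atBot_atTop.comp Real.tendsto_log_nhdsGT_zero)).congr' ?_
    filter_upwards [self_mem_nhdsWithin] with t ht
    simp [Real.log_mul ha0.ne' (ne_of_gt ht)]
  have hnorm : truncNegLogPow a k =O[𝓝[>] 0] fun t => (-Real.log (a * t)) ^ k.re := by
    refine IsBigO.of_bound 1 ?_
    filter_upwards [Ioo_mem_nhdsGT one_pos] with t ht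
    have ht' : t ∈ Ioc 0 1 := Ioo_subset_Ioc_self ht
    rw [truncNegLogPow, indicator_of_mem ht', neg_log_ofReal_mul_ofReal ha0 ht.1,
      Complex.norm_cpow_eq_rpow_re_of_pos (neg_log_mul_pos ha0 ha1 ht'), one_mul,
      Real.norm_of_nonneg (Real.rpow_nonneg (neg_log_mul_pos ha0 ha1 ht').le _)]
  have hexp : (fun t => Real.exp (ε * -Real.log (a * t))) =ᶠ[𝓝[>] 0]
      fun t => a ^ (-ε) * t ^ (-ε) := by
    filter_upwards [self_mem_nhdsWithin] with t ht
    rw [← Real.mul_rpow ha0.le (le_of_lt ht), Real.rpow_def_of_pos (mul_pos ha0 ht)]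
    ring_nf
  exact hnorm.trans (((isLittleO_rpow_exp_pos_mul_atTop k.re hε).isBigO.comp_tendsto hlog).trans
    ((isBigO_refl _ _).const_mul_left _ |>.congr' hexp.symm EventuallyEq.rfl))

theorem mellinConvergent_truncNegLogPow (ha0 : 0 < a) (ha1 : a < 1) {s : ℂ} (hs : 0 < s.re) :
    MellinConvergent (truncNegLogPow a k) s :=
  mellinConvergent_of_isBigO_rpow_exp one_pos (locallyIntegrableOn_truncNegLogPow k ha0 ha1)
    (truncNegLogPow_isBigO_atTop k) (truncNegLogPow_isBigO_nhdsGT_zero k ha0 ha1 (half_pos hs))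
    (by linarith)

theorem differentiableAt_mellin_truncNegLogPow (ha0 : 0 < a) (ha1 : a < 1) {s : ℂ}
    (hs : 0 < s.re) : DifferentiableAt ℂ (mellin (truncNegLogPow a k)) s :=
  mellin_differentiableAt_of_isBigO_rpow_exp one_pos
    (locallyIntegrableOn_truncNegLogPow k ha0 ha1) (truncNegLogPow_isBigO_atTop k)
    (truncNegLogPow_isBigO_nhdsGT_zero k ha0 ha1 (half_pos hs)) (by linarith)

end NegLogPow

section MellinIdentity

variable {a : ℝ} (k : ℂ)

theorem exp_neg_div_smul_cpow_mul_neg_log_pow (ha0 : 0 < a) (ha1 : a < 1) {s u : ℝ}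
    (hs : 0 < s) (hu : 0 < u) :
    (Real.exp (-u / s) / s) • (((Real.exp (-u / s) : ℝ) : ℂ) ^ ((s:ℂ) - 1)
        * (-Complex.log ((a:ℂ) * (Real.exp (-u / s) : ℝ))) ^ k)
      = Complex.exp (-(u:ℂ)) * ((u:ℂ) + -((s:ℂ) * Complex.log a)) ^ k / (s:ℂ) ^ (k + 1) := by
  have hx : 0 < u - s * Real.log a := by nlinarith [Real.log_neg ha0 ha1]
  have hs' : (s:ℂ) ≠ 0 := Complex.ofReal_ne_zero.mpr hs.ne'
  have hlog : -Complex.log ((a:ℂ) * (Real.exp (-u / s) : ℝ))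
      = ((u - s * Real.log a : ℝ) : ℂ) / (s:ℂ) := by
    rw [neg_log_ofReal_mul_ofReal ha0 (Real.exp_pos _),
      Real.log_mul ha0.ne' (Real.exp_pos _).ne', Real.log_exp]
    push_cast
    field_simp
    ring
  have hpow : ((Real.exp (-u / s) : ℝ) : ℂ) ^ ((s:ℂ) - 1)
      = ((Real.exp (-u / s * (s - 1)) : ℝ) : ℂ) := by
    rw [Real.exp_mul, Complex.ofReal_cpow (Real.exp_pos _).le]
    push_cast
    rfl
  have hexp : Real.exp (-u) = Real.exp (-u / s) * Real.exp (-u / s * (s - 1)) := by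
    rw [← Real.exp_add]
    congr 1
    field_simp
    ring
  have hbase : (u:ℂ) + -((s:ℂ) * Complex.log a) = ((u - s * Real.log a : ℝ) : ℂ) := by
    rw [← Complex.ofReal_log ha0.le]
    push_cast
    ring
  rw [hlog, Complex.div_cpow_ofReal_nonneg hx.le hs.le, hpow, hbase, ← Complex.ofReal_neg,
    ← Complex.ofReal_exp, hexp, Complex.cpow_add _ _ hs', Complex.cpow_one, Complex.real_smul]
  push_cast
  field_simp

theorem integral_Ioc_cpow_mul_neg_log_pow_ofReal (ha0 : 0 < a) (ha1 : a < 1) {s : ℝ}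
    (hs : 0 < s) :
    ∫ t in Ioc (0:ℝ) 1, (t:ℂ) ^ ((s:ℂ) - 1) * (-Complex.log ((a:ℂ) * (t:ℂ))) ^ k
      = shiftedGammaIntegral k (-((s:ℂ) * Complex.log a)) / (s:ℂ) ^ (k + 1) := by
  rw [integral_Ioc_eq_integral_Ioo, integral_Ioo_zero_one_eq_integral_Ioi_exp_neg_div _ hs,
    shiftedGammaIntegral, ← integral_div]
  exact setIntegral_congr_fun measurableSet_Ioi fun u hu =>
    exp_neg_div_smul_cpow_mul_neg_log_pow k ha0 ha1 hs hu

theorem integral_Ioc_cpow_mul_neg_log_pow (ha0 : 0 < a) (ha1 : a < 1) {s : ℂ} (hs : 0 < s.re) :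
    ∫ t in Ioc (0:ℝ) 1, (t:ℂ) ^ (s - 1) * (-Complex.log ((a:ℂ) * (t:ℂ))) ^ k
      = shiftedGammaIntegral k (-(s * Complex.log a)) / s ^ (k + 1) := by
  have hU : IsOpen {s : ℂ | 0 < s.re} := isOpen_lt continuous_const Complex.continuous_re
  have hmaps : MapsTo (fun s : ℂ => -(s * Complex.log a)) {s | 0 < s.re} {z | 0 < z.re} :=
    fun s (hs : 0 < s.re) => by
      rw [← Complex.ofReal_log ha0.le]
      simpa using neg_pos.mpr (mul_neg_of_pos_of_neg hs (Real.log_neg ha0 ha1))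
  have hmellin : AnalyticOnNhd ℂ (mellin (truncNegLogPow a k)) {s | 0 < s.re} :=
    DifferentiableOn.analyticOnNhd (fun s hs =>
      (differentiableAt_mellin_truncNegLogPow k ha0 ha1 hs).differentiableWithinAt) hU
  have hgamma : AnalyticOnNhd ℂ
      (fun s => shiftedGammaIntegral k (-(s * Complex.log a)) / s ^ (k + 1)) {s | 0 < s.re} :=
    DifferentiableOn.analyticOnNhd (((differentiableOn_shiftedGammaIntegral k).comp
      (by fun_prop) hmaps).div
      (fun s hs => (differentiableAt_id.cpow_const (Or.inl hs)).differentiableWithinAt)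
      fun s (hs : 0 < s.re) => by
        rw [Ne, Complex.cpow_eq_zero_iff]
        exact fun h => by simp [h.1] at hs) hU
  have hreal : ∀ᶠ x : ℝ in 𝓝[≠] 1, mellin (truncNegLogPow a k) x
      = shiftedGammaIntegral k (-((x:ℂ) * Complex.log a)) / (x:ℂ) ^ (k + 1) :=
    ((eventually_gt_nhds one_pos).filter_mono nhdsWithin_le_nhds).mono fun x hx => by
      rw [mellin_truncNegLogPow]
      exact integral_Ioc_cpow_mul_neg_log_pow_ofReal k ha0 ha1 hx
  have hfreq := ((Complex.continuous_ofReal.continuousWithinAt (x := 1)).tendsto_nhdsWithin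
    (t := {((1:ℝ):ℂ)}ᶜ) fun x (hx : x ∈ ({1} : Set ℝ)ᶜ) => by simpa using hx).frequently
    (p := fun z => mellin (truncNegLogPow a k) z
      = shiftedGammaIntegral k (-(z * Complex.log a)) / z ^ (k + 1)) hreal.frequently
  rw [← mellin_truncNegLogPow]
  exact hmellin.eqOn_of_preconnected_of_frequently_eq hgamma
    (convex_halfSpace_re_gt 0).isPreconnected (z₀ := ((1:ℝ):ℂ)) (by simp) hfreq hs

end MellinIdentity

theorem uGamma_div_cpow_mul_cpow {a : ℝ} (ha : 0 < a) (k s : ℂ) :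
    uGamma (1 + k) (-(s * Complex.log a)) / ((a:ℂ) ^ s * s ^ (k + 1))
      = shiftedGammaIntegral k (-(s * Complex.log a)) / s ^ (k + 1) := by
  rw [uGamma_eq_exp_mul_shiftedGammaIntegral, neg_neg,
    Complex.cpow_def_of_ne_zero (Complex.ofReal_ne_zero.mpr ha.ne'), mul_comm (Complex.log a),
    mul_div_mul_left _ _ (Complex.exp_ne_zero _)]

theorem stmt0 (a : ℝ) (ha0 : 0 < a) (ha1 : a < 1) (b c k m : ℂ)
    (hb : 0 < b.re) (hm : 0 < m.re) (hc : ‖c‖ < 1) :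
    (∫ t in (0:ℝ)..1, (t:ℂ) ^ (m - 1) * (-(Complex.log ((a:ℂ) * (t:ℂ)))) ^ k
        / (1 + c * (t:ℂ) ^ b))
    = ∑' j : ℕ, (-c) ^ j * uGamma (1 + k) (-((b * (j:ℂ) + m) * Complex.log (a:ℂ)))
        / ((a:ℂ) ^ (b * (j:ℂ) + m) * (b * (j:ℂ) + m) ^ (k + 1)) := by
  have hexp_re : ∀ j : ℕ, 0 < (b * (j:ℂ) + m).re := fun j => by
    simp only [Complex.add_re, Complex.mul_re, Complex.natCast_re, Complex.natCast_im, mul_zero,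
      sub_zero]
    positivity
  have hbound : ∀ᵐ t : ℝ ∂volume.restrict (Ioc (0:ℝ) 1), ‖c * (t:ℂ) ^ b‖ ≤ ‖c‖ := by
    filter_upwards [ae_restrict_mem measurableSet_Ioc] with t ht
    rw [norm_mul, Complex.norm_cpow_eq_rpow_re_of_pos ht.1]
    exact mul_le_of_le_one_right (norm_nonneg c) (Real.rpow_le_one ht.1.le ht.2 hb.le)
  rw [intervalIntegral.integral_of_le zero_le_one, integral_div_one_add_eq_tsum
    ((mellinConvergent_truncNegLogPow_iff k m).mp (mellinConvergent_truncNegLogPow k ha0 ha1 hm))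
    (by fun_prop : Measurable fun t : ℝ => c * (t:ℂ) ^ b).aestronglyMeasurable
    (norm_nonneg c) hc hbound]
  refine tsum_congr fun j => ?_
  rw [mul_div_assoc, uGamma_div_cpow_mul_cpow ha0, ← integral_Ioc_cpow_mul_neg_log_pow k ha0 ha1
    (hexp_re j), ← integral_const_mul]
  refine setIntegral_congr_fun measurableSet_Ioc fun t ht => ?_
  have ht0 : (t:ℂ) ≠ 0 := Complex.ofReal_ne_zero.mpr ht.1.ne'
  rw [show b * (j:ℂ) + m - 1 = (j:ℂ) * b + (m - 1) by ring, Complex.cpow_add _ _ ht0,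
    Complex.cpow_nat_mul, neg_mul_eq_neg_mul, mul_pow]
  ring
end

section
/- Let n ∈ ℕ with n ≥ 2, let b, q ∈ ℝ with b > 0 and q > 0, let m ∈ ℝ with m > −1, and let c ∈ ℂ with ‖c‖ < 1. Then ∫₀¹ x^m (log x)^n / ((1 + c x^b)(q² + (log x)²)) dx = (n−1)! · Σ_{j=0}^∞ (1/2) (−c)^j e^{−i(1+bj+m)q} (1+bj+m) ((1+bj+m)² q²)^{−n} · [ (−i q)^n (−i(1+bj+m)q)^n E_n(−i(1+bj+m)q) + e^{2i(1+bj+m)q} (i q)^n (i(1+bj+m)q)^n E_n(i(1+bj+m)q) ]. -/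
open MeasureTheory

/-- Generalized exponential integral: `E_n(z) = ∫₁^∞ e^{-z t} t^{-n} dt`,
with the principal-branch complex power `t^{-n}`. -/
noncomputable def expE (n : ℕ) (z : ℂ) : ℂ :=
  ∫ t in Set.Ioi (1:ℝ), Complex.exp (-z * (t:ℂ)) * (t:ℂ) ^ (-(n:ℂ))

/-!
Substituting `x = e^{-t}` and expanding `1 / (1 + c x^b)` as a geometric series, whose terms
are dominated by `‖c‖^j`, turns the `j`-th term into `(-1)^n ∫₀^∞ t^n e^{-A t} / (q² + t²) dt`
with `A = 1 + b j + m`. The partial fractions `t / (q² + t²) = ½ (1 / (t + i q) + 1 / (t - i q))`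
reduce this to integrals `∫₀^∞ t^{n-1} e^{-A t} / (t + w) dt` with `Re w ≥ 0`. Writing
`1 / (t + w) = A ∫₀^∞ e^{-A (t + w) u} du` and swapping the integrals (absolutely convergent
because `n ≥ 2`) gives `(n-1)! A^{1-n} ∫₀^∞ e^{-A w u} (1 + u)^{-n} du`, which is
`(n-1)! A^{1-n} e^{A w} E_n(A w)` after the shift `t = 1 + u`.
-/

open Set Filter
open Complex
open scoped Nat

theorem integral_exp_neg_mul_complex_Ioi {z : ℂ} (hz : 0 < z.re) :
    ∫ u in Ioi (0:ℝ), cexp (-(z * u)) = z⁻¹ := by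
  have := integral_exp_mul_complex_Ioi (a := -z) (by simpa using hz) 0
  simp only [neg_mul, ofReal_zero, mul_zero, exp_zero] at this
  rw [this, neg_div_neg_eq, one_div]

theorem integrableOn_exp_neg_mul_complex_Ioi {z : ℂ} (hz : 0 < z.re) :
    IntegrableOn (fun u : ℝ => cexp (-(z * u))) (Ioi 0) := by
  simpa only [neg_mul] using integrableOn_exp_mul_complex_Ioi (a := -z) (by simpa using hz) 0

theorem integrableOn_pow_mul_exp_neg_mul_Ioi (k : ℕ) {r : ℝ} (hr : 0 < r) :
    IntegrableOn (fun t : ℝ => t ^ k * Real.exp (-(r * t))) (Ioi 0) := by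
  refine (integrableOn_rpow_mul_exp_neg_mul_rpow (p := 1) (s := k)
    (neg_one_lt_zero.trans_le k.cast_nonneg) one_pos hr).congr_fun (fun t _ => ?_)
    measurableSet_Ioi
  simp

theorem integral_pow_mul_exp_neg_mul_complex_Ioi (k : ℕ) {r : ℝ} (hr : 0 < r) :
    ∫ t in Ioi (0:ℝ), (t:ℂ) ^ k * cexp (-(r * t)) = k ! / (r:ℂ) ^ (k + 1) := by
  have h := integral_cpow_mul_exp_neg_mul_Ioi (a := k + 1) (by simp; positivity) hr
  simp only [add_sub_cancel_right, cpow_natCast] at h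
  rw [h, ← Nat.cast_succ, cpow_natCast, Nat.cast_succ, Gamma_nat_eq_factorial,
    div_pow, one_pow, one_div_mul_eq_div]

theorem integrableOn_Ioi_of_norm_le_pow_mul_exp {E : Type*} [NormedAddCommGroup E] {f : ℝ → E}
    (k : ℕ) {a : ℝ} (ha : 0 < a) (hf : AEStronglyMeasurable f (volume.restrict (Ioi 0)))
    (hle : ∀ t ∈ Ioi (0:ℝ), ‖f t‖ ≤ t ^ k * Real.exp (-(a * t))) :
    IntegrableOn f (Ioi 0) :=
  (integrableOn_pow_mul_exp_neg_mul_Ioi k ha).mono' hf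
    ((ae_restrict_iff' measurableSet_Ioi).mpr (Eventually.of_forall hle))

theorem exp_mul_expE (n : ℕ) (z : ℂ) :
    cexp z * expE n z = ∫ u in Ioi (0:ℝ), cexp (-(z * u)) / (1 + u) ^ n := by
  have hshift : (fun u : ℝ => u + 1) '' Ioi 0 = Ioi 1 := by
    rw [image_add_const_Ioi, zero_add]
  rw [expE, ← integral_const_mul, ← hshift, integral_image_eq_integral_abs_deriv_smul
    measurableSet_Ioi (fun u _ => ((hasDerivAt_id' u).add_const 1).hasDerivWithinAt)
    (add_left_injective 1).injOn]
  refine setIntegral_congr_fun measurableSet_Ioi (fun u _ => ?_)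
  simp only [abs_one, one_smul, ofReal_add, ofReal_one, cpow_neg, cpow_natCast]
  rw [← mul_assoc, ← exp_add, div_eq_mul_inv, add_comm (u:ℂ)]
  ring_nf

section ExpIntegralRepresentation

variable {k : ℕ} {a : ℝ} {w : ℂ}

theorem re_mul_add_pos (ha : 0 < a) (hw : 0 ≤ w.re) {t : ℝ} (ht : 0 < t) :
    0 < ((a:ℂ) * (t + w)).re := by
  simp only [mul_re, ofReal_re, ofReal_im, add_re, zero_mul, sub_zero]
  positivity

theorem integrableOn_pow_mul_exp_neg_mul_div_add (hk : 1 ≤ k) (ha : 0 < a) (hw : 0 ≤ w.re) :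
    IntegrableOn (fun t : ℝ => (t:ℂ) ^ k * cexp (-(a * t)) / (t + w)) (Ioi 0) := by
  refine integrableOn_Ioi_of_norm_le_pow_mul_exp (k - 1) ha
    (Measurable.aestronglyMeasurable (by fun_prop)) (fun t (ht : 0 < t) => ?_)
  have ht_le : t ≤ ‖(t:ℂ) + w‖ := by
    simpa using (re_le_norm ((t:ℂ) + w)).trans' (by simpa using hw)
  rw [norm_div, norm_mul, norm_pow, norm_real, Real.norm_of_nonneg ht.le,
    norm_exp, div_le_iff₀ (ht.trans_le ht_le), ← pow_sub_mul_pow t hk, pow_one]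
  simp only [neg_re, mul_re, ofReal_re, ofReal_im, mul_zero, sub_zero]
  have := mul_nonneg (pow_nonneg ht.le (k - 1)) (Real.exp_pos (-(a * t))).le
  nlinarith

theorem integrable_prod_pow_mul_exp_mul_exp (hk : 1 ≤ k) (ha : 0 < a) (hw : 0 ≤ w.re) :
    Integrable (fun p : ℝ × ℝ => (a * (p.1:ℂ) ^ k * cexp (-(a * p.1)))
        * cexp (-((a * (p.1 + w)) * p.2)))
      ((volume.restrict (Ioi (0:ℝ))).prod (volume.restrict (Ioi (0:ℝ)))) := by
  have hmeas : AEStronglyMeasurable (fun p : ℝ × ℝ => (a * (p.1:ℂ) ^ k * cexp (-(a * p.1)))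
      * cexp (-((a * (p.1 + w)) * p.2)))
      ((volume.restrict (Ioi (0:ℝ))).prod (volume.restrict (Ioi (0:ℝ)))) :=
    (by fun_prop : Continuous _).aestronglyMeasurable
  refine (integrable_prod_iff hmeas).mpr ⟨?_, ?_⟩
  · filter_upwards [ae_restrict_mem measurableSet_Ioi] with t ht
    exact (integrableOn_exp_neg_mul_complex_Ioi (re_mul_add_pos ha hw ht)).const_mul _
  refine integrableOn_Ioi_of_norm_le_pow_mul_exp (k - 1) ha hmeas.norm.integral_prod_right'
    (fun t (ht : 0 < t) => ?_)
  have hr : 0 < a * (t + w.re) := by positivity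
  have hexp := integral_exp_mul_Ioi (a := -(a * (t + w.re))) (by linarith) 0
  simp only [mul_zero, Real.exp_zero, neg_mul] at hexp
  have hnorm : ∀ u : ℝ, ‖(a * (t:ℂ) ^ k * cexp (-(a * t))) * cexp (-((a * (t + w)) * u))‖
      = (a * t ^ k * Real.exp (-(a * t))) * Real.exp (-((a * (t + w.re)) * u)) := fun u => by
    simp [norm_exp, norm_real, abs_of_pos ha, abs_of_pos ht, mul_re]
  simp only [hnorm]
  rw [integral_const_mul, hexp, neg_div_neg_eq, Real.norm_of_nonneg (by positivity),
    ← pow_sub_mul_pow t hk, pow_one, mul_one_div, div_le_iff₀ hr]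
  have := mul_nonneg (mul_nonneg (pow_nonneg ht.le (k - 1)) (Real.exp_pos (-(a * t))).le)
    (mul_nonneg ha.le hw)
  nlinarith

theorem integral_pow_mul_exp_neg_mul_div_add (hk : 1 ≤ k) (ha : 0 < a) (hw : 0 ≤ w.re) :
    ∫ t in Ioi (0:ℝ), (t:ℂ) ^ k * cexp (-(a * t)) / (t + w)
      = k ! / (a:ℂ) ^ k * (cexp (a * w) * expE (k + 1) (a * w)) := by
  have ha0 : (a:ℂ) ≠ 0 := by exact_mod_cast ha.ne'
  set F : ℝ → ℝ → ℂ := fun t u =>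
    (a * (t:ℂ) ^ k * cexp (-(a * t))) * cexp (-((a * (t + w)) * u)) with hF
  have inner_u : ∀ t ∈ Ioi (0:ℝ),
      ∫ u in Ioi (0:ℝ), F t u = (t:ℂ) ^ k * cexp (-(a * t)) / (t + w) := fun t ht => by
      have hre := re_mul_add_pos ha hw ht
      have htw : (t:ℂ) + w ≠ 0 := fun h => by simp [h] at hre
      rw [integral_const_mul, integral_exp_neg_mul_complex_Ioi hre]
      field_simp
  have inner_t : ∀ u ∈ Ioi (0:ℝ), ∫ t in Ioi (0:ℝ), F t u
      = k ! / (a:ℂ) ^ k * (cexp (-((a * w) * u)) / (1 + u) ^ (k + 1)) := fun u (hu : 0 < u) => by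
    have hsplit : ∀ t : ℝ, F t u
        = (a * cexp (-((a * w) * u))) * ((t:ℂ) ^ k * cexp (-(((a * (1 + u) : ℝ) : ℂ) * t))) :=
      fun t => by
        simp only [hF]
        rw [mul_mul_mul_comm, mul_assoc, mul_assoc, ← exp_add, ← exp_add]
        push_cast
        ring_nf
    have h1u : (1:ℂ) + u ≠ 0 := by exact_mod_cast (by linarith : (1:ℝ) + u ≠ 0)
    simp_rw [hsplit]
    rw [integral_const_mul, integral_pow_mul_exp_neg_mul_complex_Ioi k (by positivity),
      ofReal_mul, mul_pow]
    push_cast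
    field_simp
    ring
  calc ∫ t in Ioi (0:ℝ), (t:ℂ) ^ k * cexp (-(a * t)) / (t + w)
      = ∫ t in Ioi (0:ℝ), ∫ u in Ioi (0:ℝ), F t u :=
        (setIntegral_congr_fun measurableSet_Ioi inner_u).symm
    _ = ∫ u in Ioi (0:ℝ), ∫ t in Ioi (0:ℝ), F t u :=
        integral_integral_swap (integrable_prod_pow_mul_exp_mul_exp hk ha hw)
    _ = ∫ u in Ioi (0:ℝ), k ! / (a:ℂ) ^ k * (cexp (-((a * w) * u)) / (1 + u) ^ (k + 1)) :=
        setIntegral_congr_fun measurableSet_Ioi inner_t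
    _ = _ := by rw [integral_const_mul, exp_mul_expE]

end ExpIntegralRepresentation

theorem pow_succ_mul_div_sq_add_sq (k : ℕ) {t : ℝ} (ht : 0 < t) (q : ℝ) (z : ℂ) :
    (t:ℂ) ^ (k + 1) * z / (q ^ 2 + t ^ 2)
      = (1 / 2) * ((t:ℂ) ^ k * z / (t + I * q) + (t:ℂ) ^ k * z / (t + -I * q)) := by
  have hne : ∀ s : ℝ, (t:ℂ) + I * s ≠ 0 := fun s h => by
    simpa [ht.ne'] using congrArg re h
  have hfac : (q:ℂ) ^ 2 + t ^ 2 = (t + I * q) * (t + -I * q) := by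
    linear_combination (q:ℂ) ^ 2 * I_sq
  have hne' : (t:ℂ) + -I * q ≠ 0 := by simpa using hne (-q)
  rw [hfac, div_add_div _ _ (hne q) hne', mul_div_assoc']
  congr 1
  ring

theorem integrableOn_pow_succ_mul_exp_neg_mul_div_sq_add_sq {k : ℕ} (hk : 1 ≤ k) {a : ℝ}
    (ha : 0 < a) (q : ℝ) :
    IntegrableOn (fun t : ℝ => (t:ℂ) ^ (k + 1) * cexp (-(a * t)) / (q ^ 2 + t ^ 2))
      (Ioi 0) := by
  refine IntegrableOn.congr_fun (Integrable.const_mul (c := 1 / 2) ?_)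
    (fun t ht => (pow_succ_mul_div_sq_add_sq k ht q _).symm) measurableSet_Ioi
  exact (integrableOn_pow_mul_exp_neg_mul_div_add hk ha (by simp)).add
    (integrableOn_pow_mul_exp_neg_mul_div_add hk ha (by simp))

theorem integral_pow_succ_mul_exp_neg_mul_div_sq_add_sq {k : ℕ} (hk : 1 ≤ k) {a : ℝ}
    (ha : 0 < a) (q : ℝ) :
    ∫ t in Ioi (0:ℝ), (t:ℂ) ^ (k + 1) * cexp (-(a * t)) / (q ^ 2 + t ^ 2)
      = k ! / (2 * (a:ℂ) ^ k) * (cexp (-I * a * q) * expE (k + 1) (-I * a * q)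
          + cexp (I * a * q) * expE (k + 1) (I * a * q)) := by
  rw [setIntegral_congr_fun measurableSet_Ioi (fun t ht => pow_succ_mul_div_sq_add_sq k ht q _),
    integral_const_mul, integral_add (integrableOn_pow_mul_exp_neg_mul_div_add hk ha (by simp))
      (integrableOn_pow_mul_exp_neg_mul_div_add hk ha (by simp)),
    integral_pow_mul_exp_neg_mul_div_add hk ha (by simp),
    integral_pow_mul_exp_neg_mul_div_add hk ha (by simp)]
  ring_nf

theorem image_exp_neg_Ioi_zero : (fun t : ℝ => Real.exp (-t)) '' Ioi 0 = Ioo 0 1 := by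
  ext x
  constructor
  · rintro ⟨t, ht, rfl⟩
    exact ⟨Real.exp_pos _, Real.exp_lt_one_iff.mpr (neg_lt_zero.mpr ht)⟩
  · rintro ⟨h0, h1⟩
    exact ⟨-Real.log x, neg_pos.mpr (Real.log_neg h0 h1), by simp [Real.exp_log h0]⟩

section ExpNegSubstitution

variable {E : Type*} [NormedAddCommGroup E] [NormedSpace ℝ E]

theorem hasDerivWithinAt_exp_neg (s : Set ℝ) (t : ℝ) :
    HasDerivWithinAt (fun t : ℝ => Real.exp (-t)) (-Real.exp (-t)) s t := by
  simpa using ((hasDerivAt_neg t).exp).hasDerivWithinAt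

theorem integral_Ioo_zero_one_eq_integral_comp_exp_neg (g : ℝ → E) :
    ∫ x in Ioo 0 1, g x = ∫ t in Ioi 0, Real.exp (-t) • g (Real.exp (-t)) := by
  simpa [← image_exp_neg_Ioi_zero, abs_of_pos (Real.exp_pos _)] using
    integral_image_eq_integral_abs_deriv_smul measurableSet_Ioi
      (fun t _ => hasDerivWithinAt_exp_neg _ t) (Real.exp_injective.comp neg_injective).injOn g

theorem integrableOn_Ioo_zero_one_iff_comp_exp_neg (g : ℝ → E) :
    IntegrableOn g (Ioo 0 1)
      ↔ IntegrableOn (fun t => Real.exp (-t) • g (Real.exp (-t))) (Ioi 0) := by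
  simpa [← image_exp_neg_Ioi_zero, abs_of_pos (Real.exp_pos _)] using
    integrableOn_image_iff_integrableOn_abs_deriv_smul measurableSet_Ioi
      (fun t _ => hasDerivWithinAt_exp_neg _ t) (Real.exp_injective.comp neg_injective).injOn g

end ExpNegSubstitution

theorem exp_neg_smul_cpow_mul_log_pow_div (n : ℕ) (s q t : ℝ) :
    Real.exp (-t) • ((Real.exp (-t) : ℂ) ^ (s:ℂ) * log (Real.exp (-t)) ^ n
        / (q ^ 2 + log (Real.exp (-t)) ^ 2))
      = (-1) ^ n * ((t:ℂ) ^ n * cexp (-((s + 1 : ℝ) * t)) / (q ^ 2 + t ^ 2)) := by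
  rw [← ofReal_cpow (Real.exp_pos _).le, ← ofReal_log (Real.exp_pos _).le, Real.log_exp,
    ← Real.exp_mul, real_smul, ofReal_exp, ofReal_exp]
  push_cast
  rw [neg_sq, neg_pow, show -(((s:ℂ) + 1) * t) = -t + -t * s by ring, exp_add]
  ring

theorem integrableOn_cpow_mul_log_pow_div_sq_add_log_sq {k : ℕ} (hk : 1 ≤ k) {s : ℝ}
    (hs : -1 < s) (q : ℝ) :
    IntegrableOn (fun x : ℝ => (x:ℂ) ^ (s:ℂ) * log x ^ (k + 1) / (q ^ 2 + log x ^ 2))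
      (Ioo (0:ℝ) 1) := by
  rw [integrableOn_Ioo_zero_one_iff_comp_exp_neg]
  simp_rw [exp_neg_smul_cpow_mul_log_pow_div]
  exact (integrableOn_pow_succ_mul_exp_neg_mul_div_sq_add_sq hk (by linarith) q).const_mul _

theorem integral_cpow_mul_log_pow_div_sq_add_log_sq {k : ℕ} (hk : 1 ≤ k) {s : ℝ}
    (hs : -1 < s) (q : ℝ) :
    ∫ x : ℝ in Ioo 0 1, (x:ℂ) ^ (s:ℂ) * log x ^ (k + 1) / (q ^ 2 + log x ^ 2)
      = (-1) ^ (k + 1) * (k ! / (2 * ((s + 1 : ℝ) : ℂ) ^ k)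
          * (cexp (-I * (s + 1 : ℝ) * q) * expE (k + 1) (-I * (s + 1 : ℝ) * q)
            + cexp (I * (s + 1 : ℝ) * q) * expE (k + 1) (I * (s + 1 : ℝ) * q))) := by
  rw [integral_Ioo_zero_one_eq_integral_comp_exp_neg]
  simp_rw [exp_neg_smul_cpow_mul_log_pow_div]
  rw [integral_const_mul, integral_pow_succ_mul_exp_neg_mul_div_sq_add_sq hk (by linarith) q]

theorem integral_div_one_add_mul_eq_tsum {α : Type*} [MeasurableSpace α] {μ : Measure α}
    {g h : α → ℂ} {c : ℂ} (hc : ‖c‖ < 1) (hg : AEStronglyMeasurable g μ)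
    (hg_le : ∀ᵐ x ∂μ, ‖g x‖ ≤ 1) (hh : Integrable h μ) :
    ∫ x, h x / (1 + c * g x) ∂μ = ∑' j : ℕ, (-c) ^ j * ∫ x, g x ^ j * h x ∂μ := by
  have hgj : ∀ j : ℕ, ∀ᵐ x ∂μ, ‖g x ^ j‖ ≤ 1 := fun j => by
    filter_upwards [hg_le] with x hx
    simpa using pow_le_one₀ (norm_nonneg _) hx
  have hint : ∀ j : ℕ, Integrable (fun x => (-c) ^ j * (g x ^ j * h x)) μ := fun j =>
    (hh.bdd_mul (hg.pow j) (hgj j)).const_mul _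
  have hnorm : ∀ j : ℕ,
      ∫ x, ‖(-c) ^ j * (g x ^ j * h x)‖ ∂μ ≤ ‖c‖ ^ j * ∫ x, ‖h x‖ ∂μ := fun j => by
    rw [← integral_const_mul]
    refine integral_mono_ae (hint j).norm (hh.norm.const_mul _) ?_
    filter_upwards [hgj j] with x hx
    rw [norm_mul, norm_mul, norm_pow, norm_neg]
    gcongr
    exact mul_le_of_le_one_left (norm_nonneg _) hx
  have hsum : Summable fun j : ℕ => ∫ x, ‖(-c) ^ j * (g x ^ j * h x)‖ ∂μ :=
    .of_nonneg_of_le (fun j => integral_nonneg fun x => norm_nonneg _) hnorm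
      ((summable_geometric_of_lt_one (norm_nonneg c) hc).mul_right _)
  simp_rw [← integral_const_mul]
  rw [integral_tsum_of_summable_integral_norm hint hsum]
  refine integral_congr_ae ?_
  filter_upwards [hg_le] with x hx
  have hlt : ‖-c * g x‖ < 1 := by
    rw [norm_mul, norm_neg]
    exact (mul_le_of_le_one_right (norm_nonneg c) hx).trans_lt hc
  simp_rw [← mul_assoc, ← mul_pow]
  rw [tsum_mul_right, tsum_geometric_of_norm_lt_one hlt, div_eq_mul_inv, mul_comm, sub_eq_add_neg,
    neg_mul, neg_neg]

theorem half_mul_exp_mul_zpow_mul_add_eq (k : ℕ) {A q : ℂ} (hA : A ≠ 0) (hq : q ≠ 0)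
    (z E₁ E₂ : ℂ) :
    (1 / 2) * z * cexp (-I * A * q) * A * (A ^ 2 * q ^ 2) ^ (-((k + 1 : ℕ) : ℤ))
        * ((-I * q) ^ (k + 1) * (-I * A * q) ^ (k + 1) * E₁
          + cexp (2 * I * A * q) * (I * q) ^ (k + 1) * (I * A * q) ^ (k + 1) * E₂)
      = z * (-1) ^ (k + 1) / (2 * A ^ k)
          * (cexp (-I * A * q) * E₁ + cexp (I * A * q) * E₂) := by
  have hexp : cexp (-I * A * q) * cexp (2 * I * A * q) = cexp (I * A * q) := by
    rw [← exp_add]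
    ring_nf
  have hpow : ∀ ε : ℂ, ε ^ 2 = -1 → (ε * q) ^ (k + 1) * (ε * A * q) ^ (k + 1)
      = (-1) ^ (k + 1) * A ^ (k + 1) * q ^ (2 * (k + 1)) := fun ε hε => by
    rw [← mul_pow, pow_mul, ← mul_pow, ← mul_pow]
    congr 1
    linear_combination A * q ^ 2 * hε
  have hsum : (-I * q) ^ (k + 1) * (-I * A * q) ^ (k + 1) * E₁
        + cexp (2 * I * A * q) * (I * q) ^ (k + 1) * (I * A * q) ^ (k + 1) * E₂
      = (-1) ^ (k + 1) * A ^ (k + 1) * q ^ (2 * (k + 1))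
          * (E₁ + cexp (2 * I * A * q) * E₂) := by
    linear_combination E₁ * hpow (-I) (by rw [neg_sq, I_sq])
      + cexp (2 * I * A * q) * E₂ * hpow I I_sq
  rw [zpow_neg, zpow_natCast, hsum, mul_pow, ← pow_mul, ← pow_mul, ← hexp]
  field_simp
  ring

theorem stmt1 (n : ℕ) (hn : 2 ≤ n) (b q m : ℝ) (hb : 0 < b) (hq : 0 < q)
    (hm : -1 < m) (c : ℂ) (hc : ‖c‖ < 1) :
    (∫ x in (0:ℝ)..1, (x:ℂ) ^ (m:ℂ) * (Complex.log (x:ℂ)) ^ n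
        / ((1 + c * (x:ℂ) ^ (b:ℂ)) * ((q:ℂ) ^ 2 + (Complex.log (x:ℂ)) ^ 2)))
    = (Nat.factorial (n - 1) : ℂ) * ∑' j : ℕ,
        (1/2 : ℂ) * (-c) ^ j
          * Complex.exp (-Complex.I * (1 + (b:ℂ) * (j:ℂ) + (m:ℂ)) * (q:ℂ))
          * (1 + (b:ℂ) * (j:ℂ) + (m:ℂ))
          * ((1 + (b:ℂ) * (j:ℂ) + (m:ℂ)) ^ 2 * (q:ℂ) ^ 2) ^ (-(n:ℤ))
          * ((-Complex.I * (q:ℂ)) ^ n * (-Complex.I * (1 + (b:ℂ) * (j:ℂ) + (m:ℂ)) * (q:ℂ)) ^ n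
                * expE n (-Complex.I * (1 + (b:ℂ) * (j:ℂ) + (m:ℂ)) * (q:ℂ))
              + Complex.exp (2 * Complex.I * (1 + (b:ℂ) * (j:ℂ) + (m:ℂ)) * (q:ℂ))
                * (Complex.I * (q:ℂ)) ^ n * (Complex.I * (1 + (b:ℂ) * (j:ℂ) + (m:ℂ)) * (q:ℂ)) ^ n
                * expE n (Complex.I * (1 + (b:ℂ) * (j:ℂ) + (m:ℂ)) * (q:ℂ))) := by
  obtain ⟨k, rfl⟩ : ∃ k, n = k + 1 := ⟨n - 1, by omega⟩
  have hk : 1 ≤ k := by omega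
  have hA : ∀ j : ℕ, -1 < m + b * j := fun j => lt_add_of_lt_of_nonneg hm (by positivity)
  have hxb : ∀ᵐ x : ℝ ∂volume.restrict (Ioo 0 1), ‖(x:ℂ) ^ (b:ℂ)‖ ≤ 1 := by
    filter_upwards [ae_restrict_mem measurableSet_Ioo] with x hx
    rw [norm_cpow_eq_rpow_re_of_pos hx.1, ofReal_re]
    exact Real.rpow_le_one hx.1.le hx.2.le hb.le
  have hpow : ∀ j : ℕ, ∀ x ∈ Ioo (0:ℝ) 1, ((x:ℂ) ^ (b:ℂ)) ^ j
      * ((x:ℂ) ^ (m:ℂ) * log x ^ (k + 1) / (q ^ 2 + log x ^ 2))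
      = (x:ℂ) ^ ((m + b * j : ℝ) : ℂ) * log x ^ (k + 1) / (q ^ 2 + log x ^ 2) := by
    intro j x hx
    rw [← cpow_nat_mul, ← mul_div_assoc, ← mul_assoc,
      ← cpow_add _ _ (ofReal_ne_zero.mpr hx.1.ne')]
    push_cast
    ring_nf
  simp_rw [div_mul_eq_div_div_swap]
  rw [intervalIntegral.integral_of_le zero_le_one, integral_Ioc_eq_integral_Ioo,
    integral_div_one_add_mul_eq_tsum hc
      (measurable_ofReal.pow_const _).aestronglyMeasurable hxb
      (integrableOn_cpow_mul_log_pow_div_sq_add_log_sq hk hm q), ← tsum_mul_left]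
  refine tsum_congr fun j => ?_
  have hAq : ((1 + b * j + m : ℝ) : ℂ) = 1 + b * j + m := by push_cast; ring
  have hA0 : (1 + b * j + m : ℂ) ≠ 0 := by
    rw [← hAq]
    exact ofReal_ne_zero.mpr (by linarith [hA j])
  rw [setIntegral_congr_fun measurableSet_Ioo (hpow j),
    integral_cpow_mul_log_pow_div_sq_add_log_sq hk (hA j) q,
    show m + b * j + 1 = 1 + b * j + m by ring, hAq,
    half_mul_exp_mul_zpow_mul_add_eq k hA0 (ofReal_ne_zero.mpr hq.ne'), Nat.add_sub_cancel]
  ring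
end

section
/- Let a ∈ ℝ with a > 0 and let m ∈ ℂ with Re(m) > −1. Then ∫₀¹ x^m / (a² + (log x)²) dx = (i e^{−i a (1+m)} / (2a)) · ( −Γ(0, −i a (1+m)) + e^{2 i a (1+m)} Γ(0, i a (1+m)) ). -/
/-!
With `s = 1 + m`, the substitution `x = e^{-u}` turns the left side into the Laplace transform
`∫₀^∞ e^{-su} / (a² + u²) du`. With `w = i a s`, the prefactors on the right side combine into
`(i / 2a) (e^w Γ(0, w) - e^{-w} Γ(0, -w))`, and partial fractions give
`e^w Γ(0, w) - e^{-w} Γ(0, -w) = -2w ∫₀^∞ e^{-t} / (t² - w²) dt`, so the right side equals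
`s ∫₀^∞ e^{-t} / (t² + a² s²) dt`. For real `s > 0` the two integrals agree by the substitution
`t = s u`; for complex `s` this would be a contour rotation, so instead both denominators are
written as Laplace transforms of a cosine, `∫₀^∞ e^{-sv} cos(bv) dv = s / (s² + b²)`, and the order
of integration is swapped.
-/

open MeasureTheory

open Set Filter Complex

theorem integral_comp_exp_Iic {E : Type*} [NormedAddCommGroup E] [NormedSpace ℝ E]
    (g : ℝ → E) (a : ℝ) :
    ∫ x in Iic a, Real.exp x • g (Real.exp x) = ∫ y in Ioc 0 (Real.exp a), g y := by
  symm; rw [← Real.image_exp_Iic]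
  simpa [abs_of_pos (Real.exp_pos _)] using integral_image_eq_integral_abs_deriv_smul
    measurableSet_Iic (fun x _ ↦ (Real.hasDerivAt_exp x).hasDerivWithinAt)
    (fun x _ y _ hxy ↦ Real.exp_injective hxy) g

theorem intervalIntegral_zero_one_eq_integral_Ioi_exp_neg {E : Type*} [NormedAddCommGroup E]
    [NormedSpace ℝ E] (g : ℝ → E) :
    ∫ x in (0:ℝ)..1, g x = ∫ u in Ioi 0, Real.exp (-u) • g (Real.exp (-u)) := by
  rw [intervalIntegral.integral_of_le zero_le_one,
    integral_comp_neg_Ioi (f := fun x ↦ Real.exp x • g (Real.exp x)), neg_zero,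
    integral_comp_exp_Iic, Real.exp_zero]

theorem integral_cpow_div_sq_add_log_sq (a : ℝ) (m : ℂ) :
    ∫ x in (0:ℝ)..1, (x:ℂ) ^ m / ((a:ℂ) ^ 2 + (log x) ^ 2)
      = ∫ u in Ioi (0:ℝ), exp (-((1 + m) * u)) / ((a:ℂ) ^ 2 + (u:ℂ) ^ 2) := by
  rw [intervalIntegral_zero_one_eq_integral_Ioi_exp_neg]
  refine setIntegral_congr_fun measurableSet_Ioi fun u _ ↦ ?_
  have hlog : log (Real.exp (-u) : ℂ) = -u := by
    rw [← ofReal_log (Real.exp_pos _).le, Real.log_exp, ofReal_neg]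
  rw [real_smul, hlog, cpow_def_of_ne_zero (by exact_mod_cast (Real.exp_pos _).ne'), hlog,
    ofReal_exp, ofReal_neg, mul_div_assoc', ← exp_add, neg_sq]
  ring_nf

theorem integrableOn_exp_neg_mul_Ioi {c : ℂ} (hc : 0 < c.re) :
    IntegrableOn (fun v : ℝ ↦ exp (-(c * v))) (Ioi 0) := by
  simpa [neg_mul] using integrableOn_exp_mul_complex_Ioi (a := -c) (by simpa using hc) 0

theorem integral_exp_neg_mul_Ioi {c : ℂ} (hc : 0 < c.re) :
    ∫ v in Ioi (0:ℝ), exp (-(c * v)) = c⁻¹ := by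
  have := integral_exp_mul_complex_Ioi (a := -c) (by simpa using hc) 0
  simp only [neg_mul, ofReal_zero, mul_zero, exp_zero, div_neg] at this
  rw [this, neg_div, neg_neg, one_div]

theorem sq_add_ofReal_sq_ne_zero {s : ℂ} (hs : 0 < s.re) (b : ℝ) : s ^ 2 + (b:ℂ) ^ 2 ≠ 0 := by
  have hfac : s ^ 2 + (b:ℂ) ^ 2 = (s - b * I) * (s + b * I) := by
    linear_combination (b:ℂ) ^ 2 * I_sq
  rw [hfac]
  refine mul_ne_zero (fun h ↦ ?_) (fun h ↦ ?_) <;>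
  · have := congrArg re h
    simp at this
    linarith

theorem integral_exp_neg_mul_cos_Ioi {s : ℂ} (hs : 0 < s.re) (b : ℝ) :
    ∫ v in Ioi (0:ℝ), exp (-(s * v)) * cos (b * v) = s / (s ^ 2 + (b:ℂ) ^ 2) := by
  have h₁ : 0 < (s - b * I).re := by simpa using hs
  have h₂ : 0 < (s + b * I).re := by simpa using hs
  have hsplit : ∀ v : ℝ, exp (-(s * v)) * cos (b * v)
      = (exp (-((s - b * I) * v)) + exp (-((s + b * I) * v))) / 2 := fun v ↦ by
    rw [cos, mul_div_assoc', mul_add, ← exp_add, ← exp_add]; ring_nf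
  simp_rw [hsplit]
  rw [integral_div, integral_add (integrableOn_exp_neg_mul_Ioi h₁)
    (integrableOn_exp_neg_mul_Ioi h₂), integral_exp_neg_mul_Ioi h₁, integral_exp_neg_mul_Ioi h₂]
  have := sq_add_ofReal_sq_ne_zero hs b
  have e₁ : s - b * I ≠ 0 := fun h ↦ by simp [h] at h₁
  have e₂ : s + b * I ≠ 0 := fun h ↦ by simp [h] at h₂
  field_simp
  linear_combination 2 * s * (b:ℂ) ^ 2 * I_sq

theorem uGamma_zero (z : ℂ) :
    uGamma 0 z = exp (-z) * ∫ t in Ioi (0:ℝ), exp (-(t:ℂ)) * ((t:ℂ) + z)⁻¹ := by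
  simp [uGamma, cpow_neg_one]

theorem integrableOn_exp_neg_mul_inv_add {z : ℂ} (hz : z.im ≠ 0) :
    IntegrableOn (fun t : ℝ ↦ exp (-(t:ℂ)) * ((t:ℂ) + z)⁻¹) (Ioi 0) := by
  have hne : ∀ t : ℝ, (t:ℂ) + z ≠ 0 := fun t h ↦ hz (by simpa using congrArg im h)
  refine ((exp_neg_integrableOn_Ioi 0 one_pos).mul_const |z.im|⁻¹).mono' ?_ ?_
  · exact (continuous_exp.comp continuous_ofReal.neg).mul
      ((continuous_ofReal.add continuous_const).inv₀ hne) |>.aestronglyMeasurable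
  · refine Eventually.of_forall fun t ↦ ?_
    rw [norm_mul, norm_inv, norm_exp, neg_re, ofReal_re, neg_mul, one_mul]
    gcongr
    simpa using abs_im_le_norm ((t:ℂ) + z)

theorem exp_mul_uGamma_zero_sub {z : ℂ} (hz : z.im ≠ 0) :
    exp z * uGamma 0 z - exp (-z) * uGamma 0 (-z)
      = -2 * z * ∫ t in Ioi (0:ℝ), exp (-(t:ℂ)) / ((t:ℂ) ^ 2 - z ^ 2) := by
  have hz' : (-z).im ≠ 0 := by simpa using hz
  simp only [uGamma_zero, ← mul_assoc, ← exp_add, neg_neg, add_neg_cancel, neg_add_cancel,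
    exp_zero, one_mul]
  rw [← integral_sub (integrableOn_exp_neg_mul_inv_add hz) (integrableOn_exp_neg_mul_inv_add hz'),
    ← integral_const_mul]
  refine setIntegral_congr_fun measurableSet_Ioi fun t _ ↦ ?_
  have h₁ : (t:ℂ) + z ≠ 0 := fun h ↦ hz (by simpa using congrArg im h)
  have h₂ : (t:ℂ) + -z ≠ 0 := fun h ↦ hz' (by simpa using congrArg im h)
  have h₃ : (t:ℂ) ^ 2 - z ^ 2 ≠ 0 := by
    rw [show (t:ℂ) ^ 2 - z ^ 2 = ((t:ℂ) + z) * ((t:ℂ) + -z) by ring]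
    exact mul_ne_zero h₁ h₂
  field_simp
  ring

theorem integrable_exp_neg_mul_exp_neg_mul_cos {s : ℂ} (hs : 0 < s.re) (c : ℝ) :
    Integrable (fun p : ℝ × ℝ ↦ exp (-(p.1:ℂ)) * (exp (-(s * p.2)) * cos ((c * p.1 * p.2 : ℝ) : ℂ)))
      ((volume.restrict (Ioi 0)).prod (volume.restrict (Ioi 0))) := by
  refine ((exp_neg_integrableOn_Ioi 0 one_pos).mul_prod
    (exp_neg_integrableOn_Ioi 0 hs)).mono' (by fun_prop) (Eventually.of_forall fun p ↦ ?_)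
  have hcos : ‖cos ((c * p.1 * p.2 : ℝ) : ℂ)‖ ≤ 1 := by
    rw [← ofReal_cos, norm_real, Real.norm_eq_abs]
    exact Real.abs_cos_le_one _
  rw [norm_mul, norm_mul, norm_exp, norm_exp]
  simp only [neg_re, ofReal_re, mul_re, ofReal_im, mul_zero, sub_zero, neg_mul, one_mul]
  gcongr
  exact mul_le_of_le_one_right (Real.exp_pos _).le hcos

theorem integral_exp_neg_mul_div_sq_add_sq {s : ℂ} (hs : 0 < s.re) {a : ℝ} (ha : a ≠ 0) :
    ∫ v in Ioi (0:ℝ), exp (-(s * v)) / ((a:ℂ) ^ 2 + (v:ℂ) ^ 2)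
      = s * ∫ t in Ioi (0:ℝ), exp (-(t:ℂ)) / ((t:ℂ) ^ 2 + (a * s) ^ 2) := by
  set F : ℝ → ℝ → ℂ := fun t v ↦ exp (-(t:ℂ)) * (exp (-(s * v)) * cos ((a⁻¹ * t * v : ℝ) : ℂ))
  have haC : (a:ℂ) ≠ 0 := by exact_mod_cast ha
  have hF_v : ∀ t : ℝ, ∫ v in Ioi (0:ℝ), F t v
      = a ^ 2 * s * (exp (-(t:ℂ)) / ((t:ℂ) ^ 2 + (a * s) ^ 2)) := fun t ↦ by
    have hcos : ∀ v : ℝ, F t v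
        = exp (-(t:ℂ)) * (exp (-(s * v)) * cos (((a⁻¹ * t : ℝ) : ℂ) * v)) := fun v ↦ by
      simp only [F]; push_cast; ring_nf
    simp_rw [hcos]
    rw [integral_const_mul, integral_exp_neg_mul_cos_Ioi hs]
    have := sq_add_ofReal_sq_ne_zero hs (a⁻¹ * t)
    push_cast at this ⊢
    field_simp
    ring
  have hF_t : ∀ v : ℝ, ∫ t in Ioi (0:ℝ), F t v
      = a ^ 2 * (exp (-(s * v)) / ((a:ℂ) ^ 2 + (v:ℂ) ^ 2)) := fun v ↦ by
    have hcos : ∀ t : ℝ, F t v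
        = exp (-(s * v)) * (exp (-(1 * t)) * cos (((a⁻¹ * v : ℝ) : ℂ) * t)) := fun t ↦ by
      simp only [F]; push_cast; ring_nf
    simp_rw [hcos]
    rw [integral_const_mul, integral_exp_neg_mul_cos_Ioi (by simp)]
    have := sq_add_ofReal_sq_ne_zero (s := 1) (by simp) (a⁻¹ * v)
    push_cast at this ⊢
    field_simp
  apply mul_left_cancel₀ (pow_ne_zero 2 haC)
  calc (a:ℂ) ^ 2 * ∫ v in Ioi (0:ℝ), exp (-(s * v)) / ((a:ℂ) ^ 2 + (v:ℂ) ^ 2)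
      = ∫ v in Ioi (0:ℝ), ∫ t in Ioi (0:ℝ), F t v := by
        simp_rw [hF_t, integral_const_mul]
    _ = ∫ t in Ioi (0:ℝ), ∫ v in Ioi (0:ℝ), F t v :=
        (integral_integral_swap (integrable_exp_neg_mul_exp_neg_mul_cos hs a⁻¹)).symm
    _ = (a:ℂ) ^ 2 * (s * ∫ t in Ioi (0:ℝ), exp (-(t:ℂ)) / ((t:ℂ) ^ 2 + (a * s) ^ 2)) := by
        simp_rw [hF_v, integral_const_mul]
        ring

theorem stmt2 (a : ℝ) (ha : 0 < a) (m : ℂ) (hm : -1 < m.re) :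
    (∫ x in (0:ℝ)..1, (x:ℂ) ^ m / ((a:ℂ) ^ 2 + (Complex.log (x:ℂ)) ^ 2))
    = Complex.I * Complex.exp (-Complex.I * (a:ℂ) * (1 + m)) / (2 * (a:ℂ))
        * (-(uGamma 0 (-Complex.I * (a:ℂ) * (1 + m)))
            + Complex.exp (2 * Complex.I * (a:ℂ) * (1 + m))
              * uGamma 0 (Complex.I * (a:ℂ) * (1 + m))) := by
  have hs : 0 < (1 + m).re := by simp only [add_re, one_re]; linarith
  have haC : (a:ℂ) ≠ 0 := by exact_mod_cast ha.ne'
  set w := I * a * (1 + m) with hw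
  have hw_im : w.im ≠ 0 := by simpa [hw] using (mul_pos ha hs).ne'
  have hsq : ∀ t : ℝ, (t:ℂ) ^ 2 - w ^ 2 = (t:ℂ) ^ 2 + (a * (1 + m)) ^ 2 := fun t ↦ by
    linear_combination (-(a * (1 + m)) ^ 2 : ℂ) * I_sq
  calc _ = (1 + m) * ∫ t in Ioi (0:ℝ), exp (-(t:ℂ)) / ((t:ℂ) ^ 2 - w ^ 2) := by
        simp_rw [integral_cpow_div_sq_add_log_sq, integral_exp_neg_mul_div_sq_add_sq hs ha.ne', hsq]
    _ = I / (2 * a) * (exp w * uGamma 0 w - exp (-w) * uGamma 0 (-w)) := by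
        have hcoeff : I / (2 * a) * (-2 * w) = 1 + m := by
          rw [hw]; field_simp; linear_combination (-(1 + m)) * I_sq
        rw [exp_mul_uGamma_zero_sub hw_im, ← mul_assoc, hcoeff]
    _ = _ := by
        rw [show -I * a * (1 + m) = -w by ring, show 2 * I * a * (1 + m) = 2 * w by ring,
          show exp (2 * w) = exp w * exp w by rw [two_mul, exp_add], exp_neg]
        field_simp
        ring
end

section
/- Let a ∈ ℝ with 0 < a < 1, let n ∈ ℕ, and let b, k, m ∈ ℂ with Re(m) > −1. Then ∫₀¹ x^m (1 + b x)^n (log(1/(a x)))^k dx = Σ_{j=1}^{n+1} binom(n, j−1) · b^{j−1} · a^{−(j+m)} · Γ(1+k, −(j+m) log a) / (j+m)^{k+1}, where binom(n, j−1) is the ordinary binomial coefficient. -/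
/-!
Substituting `x = e^{-u}` turns the integral into
`∫₀^∞ e^{-u} e^{-mu} (1 + b e^{-u})^n (u + c)^k du` with `c = -log a > 0`, and expanding the
binomial reduces it to the Laplace transforms `∫₀^∞ e^{-μu} (u + c)^k du` at `μ = j + m`,
`Re μ > 0`. For real `μ > 0` the substitution `t = μu` evaluates such a transform as
`e^{μc} Γ(1 + k, μc) / μ^{k+1}`. Both sides are holomorphic in `μ` on the right half-plane (the
parametric integrals by domination and Cauchy's estimate), so the identity theorem extends this
to complex `μ`.
-/

open MeasureTheory

open Metric Filter Topology Set Real Asymptotics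

theorem rpow_le_add_rpow_of_mem_Icc {x A B : ℝ} (p : ℝ) (hA : 0 < A) (hx : x ∈ Icc A B) :
    x ^ p ≤ A ^ p + B ^ p := by
  rcases le_total 0 p with hp | hp
  · linarith [rpow_le_rpow (by linarith [hx.1]) hx.2 hp, rpow_nonneg hA.le p]
  · linarith [rpow_le_rpow_of_nonpos hA hx.1 hp, rpow_nonneg (hA.trans_le (hx.1.trans hx.2)).le p]

theorem norm_cpow_le_exp_mul_add_rpow {w : ℂ} {A B : ℝ} (k : ℂ) (hA : 0 < A)
    (hw : ‖w‖ ∈ Icc A B) : ‖w ^ k‖ ≤ exp (π * |k.im|) * (A ^ k.re + B ^ k.re) := by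
  have harg : -(π * |k.im|) ≤ w.arg * k.im :=
    calc -(π * |k.im|) ≤ -(|w.arg| * |k.im|) := by gcongr; exact Complex.abs_arg_le_pi w
      _ = -|w.arg * k.im| := by rw [abs_mul]
      _ ≤ w.arg * k.im := neg_abs_le _
  calc ‖w ^ k‖ ≤ ‖w‖ ^ k.re / exp (w.arg * k.im) := Complex.norm_cpow_le w k
    _ ≤ (A ^ k.re + B ^ k.re) / exp (-(π * |k.im|)) := by
        gcongr
        · exact add_nonneg (rpow_nonneg hA.le _) (rpow_nonneg (hA.le.trans (hw.1.trans hw.2)) _)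
        · exact rpow_le_add_rpow_of_mem_Icc _ hA hw
    _ = exp (π * |k.im|) * (A ^ k.re + B ^ k.re) := by rw [exp_neg, div_inv_eq_mul, mul_comm]

theorem integrableOn_exp_neg_mul_mul_add_rpow {ε c : ℝ} (p : ℝ) (hε : 0 < ε) (hc : 0 < c) :
    IntegrableOn (fun u => exp (-ε * u) * (u + c) ^ p) (Ioi 0) := by
  refine integrable_of_isBigO_exp_neg (half_pos hε) ?_ ?_
  · refine (continuous_exp.comp (by fun_prop)).continuousOn.mul
      (ContinuousOn.rpow_const (by fun_prop) fun u hu => Or.inl ?_)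
    linarith [mem_Ici.1 hu]
  · refine IsLittleO.isBigO ((isLittleO_iff_tendsto fun u h => absurd h (exp_ne_zero _)).2 ?_)
    have h := ((tendsto_rpow_mul_exp_neg_mul_atTop_nhds_zero p (ε / 2) (half_pos hε)).comp
      (tendsto_atTop_add_const_right atTop c tendsto_id)).mul_const (exp (ε / 2 * c))
    rw [zero_mul] at h
    refine h.congr fun u => ?_
    simp only [Function.comp_apply, id]
    rw [eq_div_iff (exp_ne_zero _),
      show -ε * u = -(ε / 2) * (u + c) + ε / 2 * c + -(ε / 2) * u by ring, exp_add, exp_add]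
    ring

theorem differentiableAt_integral_of_dominated {α E : Type*} [MeasurableSpace α]
    {μ : Measure α} [NormedAddCommGroup E] [NormedSpace ℂ E] [CompleteSpace E]
    {F : ℂ → α → E} {bound : α → ℝ} {z₀ : ℂ} {r : ℝ} (hr : 0 < r)
    (hF_meas : ∀ z, AEStronglyMeasurable (F z) μ)
    (hF_diff : ∀ᵐ t ∂μ, DifferentiableOn ℂ (F · t) (closedBall z₀ r))
    (hF_le : ∀ᵐ t ∂μ, ∀ z ∈ closedBall z₀ r, ‖F z t‖ ≤ bound t)
    (h_int : Integrable bound μ) :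
    DifferentiableAt ℂ (fun z => ∫ t, F z t ∂μ) z₀ := by
  have hr2 : 0 < r / 2 := half_pos hr
  -- `deriv (F · t) z₀` is an a.e. limit of difference quotients, which are measurable in `t`.
  have hF'_meas : AEStronglyMeasurable (fun t => deriv (F · t) z₀) μ := by
    refine aestronglyMeasurable_of_tendsto_ae (𝓝[≠] z₀)
      (f := fun z t => slope (F · t) z₀ z) (fun z => ?_) ?_
    · simp only [slope_def_module]
      exact ((hF_meas z).sub (hF_meas z₀)).const_smul _
    · filter_upwards [hF_diff] with t ht
      exact (ht.differentiableAt (closedBall_mem_nhds z₀ hr)).hasDerivAt.tendsto_slope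
  have h_sub : ∀ z ∈ ball z₀ (r / 2), closedBall z (r / 2) ⊆ closedBall z₀ r := fun z hz =>
    closedBall_subset_closedBall' (by linarith [mem_ball.1 hz])
  refine (hasDerivAt_integral_of_dominated_loc_of_deriv_le (F' := fun z t => deriv (F · t) z)
    (ball_mem_nhds z₀ hr2) (.of_forall hF_meas)
    (h_int.mono' (hF_meas z₀) (hF_le.mono fun t ht => ht z₀ (mem_closedBall_self hr.le)))
    hF'_meas ?_ (h_int.div_const (r / 2)) ?_).2.differentiableAt
  · filter_upwards [hF_diff, hF_le] with t hd hle z hz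
    exact Complex.norm_deriv_le_of_forall_mem_sphere_norm_le hr2
      (hd.diffContOnCl_ball (h_sub z hz))
      fun w hw => hle w (h_sub z hz (sphere_subset_closedBall hw))
  · filter_upwards [hF_diff] with t hd z hz
    exact (hd.differentiableAt
      (mem_of_superset (closedBall_mem_nhds z hr2) (h_sub z hz))).hasDerivAt

theorem sub_le_re_of_mem_closedBall {z z₀ : ℂ} {r : ℝ} (hz : z ∈ closedBall z₀ r) :
    z₀.re - r ≤ z.re := by
  have := (Complex.abs_re_le_norm (z - z₀)).trans (mem_closedBall_iff_norm.1 hz)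
  rw [Complex.sub_re] at this
  linarith [neg_abs_le (z.re - z₀.re)]

theorem norm_ofReal_add_mem_Icc {t : ℝ} (ht : 0 ≤ t) {z z₀ : ℂ} {r : ℝ}
    (hz : z ∈ closedBall z₀ r) :
    ‖(t : ℂ) + z‖ ∈ Icc (t + (z₀.re - r)) (t + (‖z₀‖ + r)) := by
  constructor
  · calc t + (z₀.re - r) ≤ ((t : ℂ) + z).re := by
          simpa using sub_le_re_of_mem_closedBall hz
      _ ≤ ‖(t : ℂ) + z‖ := Complex.re_le_norm _
  · calc ‖(t : ℂ) + z‖ ≤ ‖(t : ℂ)‖ + ‖z‖ := norm_add_le _ _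
      _ ≤ t + (‖z₀‖ + r) := by
          rw [Complex.norm_of_nonneg ht]
          gcongr
          linarith [norm_le_norm_add_norm_sub' z z₀, mem_closedBall_iff_norm.1 hz]

theorem differentiableOn_uGamma (s : ℂ) : DifferentiableOn ℂ (uGamma s) {z | 0 < z.re} := by
  intro z₀ hz₀
  have hr : 0 < z₀.re / 2 := half_pos hz₀
  refine (DifferentiableAt.mul (by fun_prop) ?_).differentiableWithinAt
  refine differentiableAt_integral_of_dominated hr
    (bound := fun t => exp (π * |(s - 1).im|) * (exp (-1 * t) * (t + z₀.re / 2) ^ (s - 1).re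
      + exp (-1 * t) * (t + (‖z₀‖ + z₀.re / 2)) ^ (s - 1).re))
    (fun z => (by fun_prop : Measurable fun t : ℝ =>
      Complex.exp (-(t : ℂ)) * ((t : ℂ) + z) ^ (s - 1)).aestronglyMeasurable) ?_ ?_ ?_
  · filter_upwards [ae_restrict_mem measurableSet_Ioi] with t ht z hz
    have hre : 0 < ((t : ℂ) + z).re := by
      have := sub_le_re_of_mem_closedBall hz
      simp only [Complex.add_re, Complex.ofReal_re]
      linarith [mem_Ioi.1 ht]
    fun_prop (disch := exact Complex.mem_slitPlane_iff.2 (Or.inl hre))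
  · filter_upwards [ae_restrict_mem measurableSet_Ioi] with t ht z hz
    have hA : 0 < t + z₀.re / 2 := by linarith [mem_Ioi.1 ht]
    have hmem := norm_ofReal_add_mem_Icc (mem_Ioi.1 ht).le hz
    rw [sub_half] at hmem
    rw [norm_mul, Complex.norm_exp]
    calc exp (-(t : ℂ)).re * ‖((t : ℂ) + z) ^ (s - 1)‖
        ≤ exp (-1 * t) * (exp (π * |(s - 1).im|) * ((t + z₀.re / 2) ^ (s - 1).re
          + (t + (‖z₀‖ + z₀.re / 2)) ^ (s - 1).re)) := by
          gcongr
          · simp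
          · exact norm_cpow_le_exp_mul_add_rpow _ hA hmem
      _ = _ := by ring
  · exact ((integrableOn_exp_neg_mul_mul_add_rpow _ one_pos hr).add
      (integrableOn_exp_neg_mul_mul_add_rpow _ one_pos (by positivity))).const_mul _

noncomputable def shiftedCpowLaplace (c : ℝ) (k μ : ℂ) : ℂ :=
  ∫ u in Ioi (0 : ℝ), Complex.exp (-(μ * u)) * ((u : ℂ) + c) ^ k

theorem norm_exp_neg_mul_mul_add_cpow {u c : ℝ} (huc : 0 < u + c) (k μ : ℂ) :
    ‖Complex.exp (-(μ * u)) * ((u : ℂ) + c) ^ k‖ = exp (-μ.re * u) * (u + c) ^ k.re := by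
  rw [norm_mul, Complex.norm_exp, ← Complex.ofReal_add, Complex.norm_cpow_eq_rpow_re_of_pos huc]
  simp

theorem integrableOn_exp_neg_mul_mul_add_cpow {c : ℝ} {μ : ℂ} (k : ℂ) (hc : 0 < c)
    (hμ : 0 < μ.re) :
    IntegrableOn (fun u : ℝ => Complex.exp (-(μ * u)) * ((u : ℂ) + c) ^ k) (Ioi 0) := by
  refine (integrableOn_exp_neg_mul_mul_add_rpow k.re hμ hc).mono' (by fun_prop) ?_
  filter_upwards [ae_restrict_mem measurableSet_Ioi] with u hu
  rw [norm_exp_neg_mul_mul_add_cpow (by linarith [mem_Ioi.1 hu])]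

theorem differentiableOn_shiftedCpowLaplace {c : ℝ} (k : ℂ) (hc : 0 < c) :
    DifferentiableOn ℂ (shiftedCpowLaplace c k) {μ | 0 < μ.re} := by
  intro μ₀ hμ₀
  have hr : 0 < μ₀.re / 2 := half_pos hμ₀
  refine (differentiableAt_integral_of_dominated hr
    (bound := fun u => exp (-(μ₀.re / 2) * u) * (u + c) ^ k.re)
    (fun μ => (by fun_prop : Measurable fun u : ℝ =>
      Complex.exp (-(μ * u)) * ((u : ℂ) + c) ^ k).aestronglyMeasurable)
    (.of_forall fun u => by fun_prop) ?_
    (integrableOn_exp_neg_mul_mul_add_rpow k.re hr hc)).differentiableWithinAt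
  filter_upwards [ae_restrict_mem measurableSet_Ioi] with u hu μ hμ
  have hu : 0 < u := hu
  rw [norm_exp_neg_mul_mul_add_cpow (by linarith)]
  have := sub_le_re_of_mem_closedBall hμ
  gcongr
  linarith

theorem shiftedCpowLaplace_ofReal {c r : ℝ} (k : ℂ) (hc : 0 < c) (hr : 0 < r) :
    shiftedCpowLaplace c k r
      = Complex.exp (r * c) * uGamma (1 + k) (r * c) / (r : ℂ) ^ (k + 1) := by
  have hr0 : (r : ℂ) ≠ 0 := Complex.ofReal_ne_zero.2 hr.ne'
  have hscale : ∀ u ∈ Ioi (0 : ℝ),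
      Complex.exp (-((r * u : ℝ) : ℂ)) * (((r * u : ℝ) : ℂ) + r * c) ^ k
        = (r : ℂ) ^ k * (Complex.exp (-(r * u)) * ((u : ℂ) + c) ^ k) := by
    intro u hu
    have huc : 0 ≤ u + c := by linarith [mem_Ioi.1 hu]
    rw [show ((r * u : ℝ) : ℂ) + r * c = ((r : ℝ) : ℂ) * ((u + c : ℝ) : ℂ) by push_cast; ring,
      Complex.mul_cpow_ofReal_nonneg hr.le huc]
    push_cast
    ring
  -- the substitution `t = r u` in the integral defining `uGamma`
  have hsub := integral_comp_mul_left_Ioi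
    (fun t : ℝ => Complex.exp (-(t : ℂ)) * ((t : ℂ) + r * c) ^ k) 0 hr
  rw [mul_zero, setIntegral_congr_fun measurableSet_Ioi hscale, integral_const_mul,
    Complex.real_smul, Complex.ofReal_inv, eq_inv_mul_iff_mul_eq₀ hr0] at hsub
  rw [uGamma, add_sub_cancel_left, ← mul_assoc, ← Complex.exp_add, add_neg_cancel,
    Complex.exp_zero, one_mul, Complex.cpow_add _ _ hr0, Complex.cpow_one, shiftedCpowLaplace,
    eq_div_iff (mul_ne_zero (by simp [hr0]) hr0), ← hsub]
  ring

theorem shiftedCpowLaplace_eq {c : ℝ} {μ : ℂ} (k : ℂ) (hc : 0 < c) (hμ : 0 < μ.re) :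
    shiftedCpowLaplace c k μ = Complex.exp (μ * c) * uGamma (1 + k) (μ * c) / μ ^ (k + 1) := by
  have hU : IsOpen {z : ℂ | 0 < z.re} := isOpen_lt continuous_const Complex.continuous_re
  have hrhs : DifferentiableOn ℂ
      (fun μ : ℂ => Complex.exp (μ * c) * uGamma (1 + k) (μ * c) / μ ^ (k + 1))
      {z : ℂ | 0 < z.re} := by
    intro z hz
    have hz' : 0 < (z * c).re := by simpa using mul_pos hz hc
    have hslit : z ∈ Complex.slitPlane := Complex.mem_slitPlane_iff.2 (Or.inl hz)
    have hΓ : DifferentiableAt ℂ (fun μ : ℂ => uGamma (1 + k) (μ * c)) z :=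
      ((differentiableOn_uGamma (1 + k)).differentiableAt (hU.mem_nhds hz')).comp
        (f := fun μ : ℂ => μ * c) z (by fun_prop)
    have hpow : z ^ (k + 1) ≠ 0 := by
      rw [Ne, Complex.cpow_eq_zero_iff]
      exact fun h => Complex.slitPlane_ne_zero hslit h.1
    exact (((by fun_prop : DifferentiableAt ℂ (fun μ : ℂ => Complex.exp (μ * c)) z).mul hΓ).div
      (differentiableAt_id.cpow_const hslit) hpow).differentiableWithinAt
  have hreal : Tendsto (fun x : ℝ => (x : ℂ)) (𝓝[>] 1) (𝓝[≠] 1) := by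
    refine tendsto_nhdsWithin_of_tendsto_nhds_of_eventually_within _
      (Complex.continuous_ofReal.continuousWithinAt.tendsto.trans (by simp)) ?_
    filter_upwards [self_mem_nhdsWithin] with x hx
    exact Complex.ofReal_ne_one.2 (mem_Ioi.1 hx).ne'
  refine ((differentiableOn_shiftedCpowLaplace k hc).analyticOnNhd hU)
    |>.eqOn_of_preconnected_of_frequently_eq (hrhs.analyticOnNhd hU)
      (convex_halfSpace_re_gt 0).isPreconnected (z₀ := 1) (by simp)
      (hreal.frequently (Eventually.frequently ?_)) hμ
  filter_upwards [self_mem_nhdsWithin] with x hx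
  exact shiftedCpowLaplace_ofReal k hc (by linarith [mem_Ioi.1 hx])

theorem integral_Ioo_zero_one_eq_integral_Ioi_exp_neg {E : Type*} [NormedAddCommGroup E]
    [NormedSpace ℝ E] (g : ℝ → E) :
    ∫ x in Ioo 0 1, g x = ∫ u in Ioi 0, exp (-u) • g (exp (-u)) := by
  rw [integral_comp_neg_Ioi 0 (fun u => exp u • g (exp u)), neg_zero,
    integral_Iic_eq_integral_Iio, ← exp_zero, ← image_exp_Iio,
    integral_image_eq_integral_abs_deriv_smul measurableSet_Iio
      (fun x _ => (hasDerivAt_exp x).hasDerivWithinAt) exp_injective.injOn]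
  simp_rw [abs_of_pos (exp_pos _)]

theorem exp_neg_smul_integrand_eq_sum {a u : ℝ} (ha : 0 < a) (n : ℕ) (b k m : ℂ) :
    exp (-u) • (((exp (-u) : ℝ) : ℂ) ^ m * (1 + b * ((exp (-u) : ℝ) : ℂ)) ^ n
        * Complex.log (1 / ((a : ℂ) * ((exp (-u) : ℝ) : ℂ))) ^ k)
      = ∑ i ∈ Finset.range (n + 1), (n.choose i : ℂ) * b ^ i
          * (Complex.exp (-(((i : ℂ) + 1 + m) * u)) * ((u : ℂ) + (-Real.log a : ℝ)) ^ k) := by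
  have hcpow : ((exp (-u) : ℝ) : ℂ) ^ m = Complex.exp (-u * m) := by
    rw [Complex.cpow_def_of_ne_zero (by simp), ← Complex.ofReal_log (exp_pos _).le, log_exp]
    push_cast
    ring_nf
  have hlog :
      Complex.log (1 / ((a : ℂ) * ((exp (-u) : ℝ) : ℂ))) = (u : ℂ) + (-Real.log a : ℝ) := by
    rw [← Complex.ofReal_mul, ← Complex.ofReal_one, ← Complex.ofReal_div,
      ← Complex.ofReal_log (by positivity), one_div, Real.log_inv,
      Real.log_mul ha.ne' (exp_ne_zero _), log_exp]
    push_cast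
    ring
  rw [hcpow, hlog, add_comm 1, add_pow, Finset.mul_sum, Finset.sum_mul, Finset.smul_sum]
  refine Finset.sum_congr rfl fun i _ => ?_
  rw [Complex.real_smul, one_pow, mul_one, mul_pow, Complex.ofReal_exp, ← Complex.exp_nat_mul]
  have hexp :
      Complex.exp ((-u : ℝ) : ℂ) * Complex.exp (-u * m) * Complex.exp (i * ((-u : ℝ) : ℂ))
        = Complex.exp (-(((i : ℂ) + 1 + m) * u)) := by
    rw [← Complex.exp_add, ← Complex.exp_add]
    push_cast
    ring_nf
  rw [← hexp]
  ring

theorem shiftedCpowLaplace_neg_log {a : ℝ} {μ : ℂ} (k : ℂ) (ha0 : 0 < a) (ha1 : a < 1)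
    (hμ : 0 < μ.re) :
    shiftedCpowLaplace (-Real.log a) k μ
      = (a : ℂ) ^ (-μ) * uGamma (1 + k) (-(μ * Complex.log a)) / μ ^ (k + 1) := by
  rw [shiftedCpowLaplace_eq k (neg_pos.2 (Real.log_neg ha0 ha1)) hμ,
    Complex.cpow_def_of_ne_zero (Complex.ofReal_ne_zero.2 ha0.ne'), Complex.ofReal_neg,
    Complex.ofReal_log ha0.le]
  ring_nf

theorem stmt6 (a : ℝ) (ha0 : 0 < a) (ha1 : a < 1) (n : ℕ) (b k m : ℂ) (hm : -1 < m.re) :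
    (∫ x in (0:ℝ)..1, (x:ℂ) ^ m * (1 + b * (x:ℂ)) ^ n
        * (Complex.log (1 / ((a:ℂ) * (x:ℂ)))) ^ k)
    = ∑ j ∈ Finset.Icc 1 (n + 1), (Nat.choose n (j - 1) : ℂ) * b ^ (j - 1)
        * (a:ℂ) ^ (-((j:ℂ) + m)) * uGamma (1 + k) (-(((j:ℂ) + m) * Complex.log (a:ℂ)))
        / ((j:ℂ) + m) ^ (k + 1) := by
  have hμ (i : ℕ) : 0 < ((i : ℂ) + 1 + m).re := by
    simp only [Complex.add_re, Complex.natCast_re, Complex.one_re]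
    linarith [i.cast_nonneg (α := ℝ)]
  have hc : 0 < -Real.log a := neg_pos.2 (Real.log_neg ha0 ha1)
  rw [intervalIntegral.integral_of_le zero_le_one, integral_Ioc_eq_integral_Ioo,
    integral_Ioo_zero_one_eq_integral_Ioi_exp_neg,
    setIntegral_congr_fun measurableSet_Ioi fun u _ => exp_neg_smul_integrand_eq_sum ha0 n b k m,
    integral_finsetSum _ fun i _ =>
      (integrableOn_exp_neg_mul_mul_add_cpow k hc (hμ i)).const_mul _,
    ← Finset.Ico_add_one_right_eq_Icc, Finset.sum_Ico_eq_sum_range, Nat.add_sub_cancel]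
  refine Finset.sum_congr rfl fun i _ => ?_
  rw [integral_const_mul, ← shiftedCpowLaplace, shiftedCpowLaplace_neg_log k ha0 ha1 (hμ i),
    Nat.add_sub_cancel_left]
  push_cast
  rw [add_comm 1 (i : ℂ)]
  ring
end
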